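/- arXiv:1912.00468 — 2 statements merged into one kernel-verified Lean document; each statement's English description precedes it below -/
import Mathlib

section
/- Let W be a symmetric positive semidefinite n×n matrix, c ≥ 0, δ ∈ (0,1), and ℓ ∈ {1,…,n} with w_{ℓℓ} ≤ δ·c. Let y ∈ [0,1]ⁿ satisfy yᵀWy ≤ c, and define z ∈ ℝⁿ by z_i = y_i for i ≠ ℓ and z_ℓ = 1. Then zᵀWz ≤ (1 + δ^{1/3})³ · c. -/
/-!
Factor `W = Bᵀ B`; then `x ↦ √(xᵀ W x) = ‖B x‖` is a seminorm. Since `z = y + (1 - y_ℓ) e_ℓ`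
with `|1 - y_ℓ| ≤ 1` and `e_ℓᵀ W e_ℓ = w_ℓℓ ≤ δ c`, the triangle inequality gives
`√(zᵀ W z) ≤ √c + √(δ c)`, i.e. `zᵀ W z ≤ (1 + √δ)² c`, and `√δ ≤ δ^{1/3}` for `δ ≤ 1`.
-/

/-- The quadratic form `xᵀ W x`. -/
noncomputable def quadForm {ι : Type*} [Fintype ι] (W : Matrix ι ι ℝ) (x : ι → ℝ) : ℝ :=
  ∑ i, ∑ j, W i j * x i * x j

open Matrix

section QuadForm

variable {ι : Type*} [Fintype ι]

lemma quadForm_eq_dotProduct_mulVec (W : Matrix ι ι ℝ) (x : ι → ℝ) :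
    quadForm W x = x ⬝ᵥ (W *ᵥ x) := by
  simp only [quadForm, dotProduct, mulVec, Finset.mul_sum]
  exact Finset.sum_congr rfl fun i _ => Finset.sum_congr rfl fun j _ => by ring

lemma quadForm_smul (W : Matrix ι ι ℝ) (t : ℝ) (x : ι → ℝ) :
    quadForm W (t • x) = t ^ 2 * quadForm W x := by
  simp only [quadForm_eq_dotProduct_mulVec, mulVec_smul, smul_dotProduct, dotProduct_smul,
    smul_eq_mul]
  ring

lemma quadForm_single [DecidableEq ι] (W : Matrix ι ι ℝ) (i : ι) :
    quadForm W (Pi.single i 1) = W i i := by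
  simp [quadForm_eq_dotProduct_mulVec]

lemma quadForm_conjTranspose_mul_self {κ : Type*} [Fintype κ] (B : Matrix κ ι ℝ)
    (x : ι → ℝ) : quadForm (Bᴴ * B) x = ‖WithLp.toLp 2 (B *ᵥ x)‖ ^ 2 := by
  rw [quadForm_eq_dotProduct_mulVec, ← mulVec_mulVec, dotProduct_mulVec, vecMul_conjTranspose,
    star_trivial, ← real_inner_self_eq_norm_sq, EuclideanSpace.inner_toLp_toLp, star_trivial]
  simp

namespace Matrix.PosSemidef

variable {W : Matrix ι ι ℝ}

lemma quadForm_nonneg (hW : W.PosSemidef) (x : ι → ℝ) : 0 ≤ quadForm W x := by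
  simpa [quadForm_eq_dotProduct_mulVec] using hW.dotProduct_mulVec_nonneg x

lemma sqrt_quadForm_add_le (hW : W.PosSemidef) (x y : ι → ℝ) :
    √(quadForm W (x + y)) ≤ √(quadForm W x) + √(quadForm W y) := by
  obtain ⟨B, rfl⟩ : ∃ B : Matrix ι ι ℝ, W = Bᴴ * B := by
    classical
    open scoped MatrixOrder in exact CStarAlgebra.nonneg_iff_eq_star_mul_self.mp hW.nonneg
  simp only [quadForm_conjTranspose_mul_self, Real.sqrt_sq (norm_nonneg _), mulVec_add,
    WithLp.toLp_add]
  exact norm_add_le _ _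

end Matrix.PosSemidef

end QuadForm

lemma Real.one_add_sqrt_sq_le_one_add_rpow_third_cube {δ : ℝ} (h0 : 0 ≤ δ) (h1 : δ ≤ 1) :
    (1 + √δ) ^ 2 ≤ (1 + δ ^ ((1 : ℝ) / 3)) ^ 3 := by
  have hroot : √δ ≤ δ ^ ((1 : ℝ) / 3) := by
    rw [Real.sqrt_eq_rpow]
    exact Real.rpow_le_rpow_of_exponent_ge' h0 h1 (by norm_num) (by norm_num)
  have hone : 1 ≤ 1 + δ ^ ((1 : ℝ) / 3) := le_add_of_nonneg_right (by positivity)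
  calc (1 + √δ) ^ 2 ≤ (1 + δ ^ ((1 : ℝ) / 3)) ^ 2 := by gcongr
    _ ≤ (1 + δ ^ ((1 : ℝ) / 3)) ^ 3 := pow_le_pow_right₀ hone (by norm_num)

theorem stmt_11_general {n : ℕ} (W : Matrix (Fin n) (Fin n) ℝ) (hpsd : W.PosSemidef)
    (c : ℝ) (δ : ℝ) (hδ : δ ∈ Set.Ioo (0:ℝ) 1)
    (ℓ : Fin n) (hl : W ℓ ℓ ≤ δ * c)
    (y : Fin n → ℝ) (hy : ∀ i, y i ∈ Set.Icc (0:ℝ) 1) (hfeas : quadForm W y ≤ c)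
    (z : Fin n → ℝ) (hz : ∀ i, z i = if i = ℓ then 1 else y i) :
    quadForm W z ≤ (1 + δ ^ ((1:ℝ) / 3)) ^ 3 * c := by
  obtain ⟨hδ0, hδ1⟩ := hδ
  have hc : 0 ≤ c := (hpsd.quadForm_nonneg y).trans hfeas
  have hz_eq : z = y + (1 - y ℓ) • Pi.single ℓ 1 := by
    ext i
    rw [hz]
    by_cases h : i = ℓ <;> simp [h]
  have ht : |1 - y ℓ| ≤ 1 := abs_le.2 ⟨by linarith [(hy ℓ).2], by linarith [(hy ℓ).1]⟩
  have hsqrt : √(quadForm W z) ≤ (1 + √δ) * √c := calc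
    √(quadForm W z) ≤ √(quadForm W y) + |1 - y ℓ| * √(W ℓ ℓ) := by
      have h := hpsd.sqrt_quadForm_add_le y ((1 - y ℓ) • Pi.single ℓ 1)
      rwa [quadForm_smul, quadForm_single, Real.sqrt_mul (sq_nonneg _), Real.sqrt_sq_eq_abs,
        ← hz_eq] at h
    _ ≤ √c + 1 * √(δ * c) := by gcongr
    _ = (1 + √δ) * √c := by rw [Real.sqrt_mul hδ0.le]; ring
  calc quadForm W z = √(quadForm W z) ^ 2 := (Real.sq_sqrt (hpsd.quadForm_nonneg z)).symm
    _ ≤ ((1 + √δ) * √c) ^ 2 := by gcongr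
    _ = (1 + √δ) ^ 2 * c := by rw [mul_pow, Real.sq_sqrt hc]
    _ ≤ (1 + δ ^ ((1:ℝ) / 3)) ^ 3 * c := by
      gcongr
      exact Real.one_add_sqrt_sq_le_one_add_rpow_third_cube hδ0.le hδ1.le

theorem stmt_11 {n : ℕ} (W : Matrix (Fin n) (Fin n) ℝ) (hpsd : W.PosSemidef)
    (c : ℝ) (hc : 0 ≤ c) (δ : ℝ) (hδ : δ ∈ Set.Ioo (0:ℝ) 1)
    (ℓ : Fin n) (hl : W ℓ ℓ ≤ δ * c)
    (y : Fin n → ℝ) (hy : ∀ i, y i ∈ Set.Icc (0:ℝ) 1) (hfeas : quadForm W y ≤ c)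
    (z : Fin n → ℝ) (hz : ∀ i, z i = if i = ℓ then 1 else y i) :
    quadForm W z ≤ (1 + δ ^ ((1:ℝ) / 3)) ^ 3 * c :=
  stmt_11_general W hpsd c δ hδ ℓ hl y hy hfeas z hz
end

section
/- Let r ≥ 1, and for each k ∈ {1,…,r} let W^k be a symmetric n×n matrix with nonnegative entries and diagonal d^k, and let c^k > 0. Let y ∈ [0,1]ⁿ satisfy yᵀW^k y ≤ c^k and (d^k)ᵀy ≤ c^k for all k, let α ∈ (0,1), and let X = (X₁,…,X_n) be stochastically independent {0,1}-valued random variables with ℙ[X_i = 1] = α·y_i. Then ℙ[ XᵀW^k X > c^k for some k ∈ {1,…,r} ] ≤ r·(α² + α). Moreover, for α₀ = 1/(2(r+1)) one has r·(α₀² + α₀) ≤ 1/2, and consequently for every δ ∈ (0,1) and α_δ = (1−δ)/((r+1)(1−δ+(1+δ^{1/3})³)) ≤ α₀, one has ℙ[X infeasible] ≤ r·(α_δ² + α_δ) ≤ 1/2. -/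
/-!
Write `p = αy` for the vector of success probabilities. Since `Xᵢ² = Xᵢ` and the `Xᵢ` are
independent, `𝔼[Xᵀ W X] = pᵀ W p + ∑ᵢ Wᵢᵢ pᵢ (1 - pᵢ) ≤ α² yᵀ W y + α dᵀ y ≤ (α² + α) c`, so
Markov's inequality bounds the probability that constraint `k` is violated by `α² + α`, and a
union bound over the `r` constraints gives `r (α² + α)`. Finally `α_δ ≤ α₀` because
`(1 + δ^{1/3})³ ≥ 1 ≥ 1 - δ`, and `r (a² + a)` is increasing in `a ≥ 0`.
-/

open MeasureTheory ProbabilityTheory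

/-- `α_δ = (1−δ) / ((r+1)·(1 − δ + (1 + δ^{1/3})³))`. -/
noncomputable def alphaDelta (r : ℕ) (δ : ℝ) : ℝ :=
  (1 - δ) / (((r : ℝ) + 1) * (1 - δ + (1 + δ ^ ((1:ℝ) / 3)) ^ 3))

lemma quadForm_nonneg {ι : Type*} [Fintype ι] {W : Matrix ι ι ℝ} {x : ι → ℝ}
    (hW : ∀ i j, 0 ≤ W i j) (hx : ∀ i, 0 ≤ x i) : 0 ≤ quadForm W x :=
  Finset.sum_nonneg fun i _ => Finset.sum_nonneg fun j _ =>
    mul_nonneg (mul_nonneg (hW i j) (hx i)) (hx j)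

lemma quadForm_const_mul {ι : Type*} [Fintype ι] (W : Matrix ι ι ℝ) (a : ℝ) (x : ι → ℝ) :
    quadForm W (fun i => a * x i) = a ^ 2 * quadForm W x := by
  simp only [quadForm, Finset.mul_sum]
  exact Finset.sum_congr rfl fun i _ => Finset.sum_congr rfl fun j _ => by ring

lemma mul_sq_add_le_half {R a : ℝ} (hR : 0 ≤ R) (ha : 0 ≤ a) (haR : a ≤ 1 / (2 * (R + 1))) :
    R * (a ^ 2 + a) ≤ 1 / 2 := by
  have hR1 : 0 < R + 1 := by linarith
  have h2a : a * (2 * (R + 1)) ≤ 1 := by rwa [le_div_iff₀ (by positivity)] at haR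
  nlinarith [mul_le_mul_of_nonneg_left h2a (mul_nonneg hR ha)]

lemma alphaDelta_nonneg (r : ℕ) {δ : ℝ} (hδ0 : 0 ≤ δ) (hδ1 : δ ≤ 1) : 0 ≤ alphaDelta r δ := by
  have : 0 ≤ δ ^ ((1 : ℝ) / 3) := Real.rpow_nonneg hδ0 _
  unfold alphaDelta
  positivity

lemma alphaDelta_le (r : ℕ) {δ : ℝ} (hδ0 : 0 ≤ δ) (hδ1 : δ ≤ 1) :
    alphaDelta r δ ≤ 1 / (2 * ((r : ℝ) + 1)) := by
  have hcube : 1 ≤ (1 + δ ^ ((1 : ℝ) / 3)) ^ 3 :=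
    one_le_pow₀ (le_add_of_nonneg_right (Real.rpow_nonneg hδ0 _))
  unfold alphaDelta
  rw [div_le_div_iff₀ (by positivity) (by positivity)]
  nlinarith

section

variable {Ω : Type*} [MeasurableSpace Ω] {μ : Measure Ω}

lemma measure_lt_le_ofReal_integral_div [IsFiniteMeasure μ] {f : Ω → ℝ} (hf : Integrable f μ)
    (hf0 : 0 ≤ᵐ[μ] f) {c : ℝ} (hc : 0 < c) :
    μ {ω | c < f ω} ≤ ENNReal.ofReal ((∫ ω, f ω ∂μ) / c) := by
  calc μ {ω | c < f ω} ≤ μ {ω | c ≤ f ω} := measure_mono fun ω (hω : c < f ω) => hω.le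
    _ = ENNReal.ofReal (μ.real {ω | c ≤ f ω}) := (ofReal_measureReal (measure_ne_top μ _)).symm
    _ ≤ ENNReal.ofReal ((∫ ω, f ω ∂μ) / c) := by
      refine ENNReal.ofReal_le_ofReal ?_
      rw [le_div_iff₀ hc, mul_comm]
      exact mul_meas_ge_le_integral_of_nonneg hf0 hf c

lemma measure_iUnion_le_ofReal_card_mul {κ : Type*} [Fintype κ] {s : κ → Set Ω} {a : ℝ}
    (hs : ∀ k, μ (s k) ≤ ENNReal.ofReal a) :
    μ (⋃ k, s k) ≤ ENNReal.ofReal (Fintype.card κ * a) := by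
  calc μ (⋃ k, s k) ≤ ∑ k, μ (s k) := measure_iUnion_fintype_le μ s
    _ ≤ ∑ _ : κ, ENNReal.ofReal a := Finset.sum_le_sum fun k _ => hs k
    _ = ENNReal.ofReal (Fintype.card κ * a) := by
      rw [Finset.sum_const, nsmul_eq_mul, ENNReal.ofReal_mul (by positivity), ENNReal.ofReal_natCast,
        Finset.card_univ]

lemma integrable_of_zero_or_one [IsFiniteMeasure μ] {f : Ω → ℝ} (hf : Measurable f)
    (h01 : ∀ ω, f ω = 0 ∨ f ω = 1) : Integrable f μ :=
  Integrable.of_bound hf.aestronglyMeasurable 1 <| .of_forall fun ω => by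
    rcases h01 ω with h | h <;> simp [h]

lemma integral_eq_measureReal_of_zero_or_one {f : Ω → ℝ} (hf : Measurable f)
    (h01 : ∀ ω, f ω = 0 ∨ f ω = 1) : ∫ ω, f ω ∂μ = μ.real {ω | f ω = 1} := by
  have hind : f = {ω | f ω = 1}.indicator 1 := by
    funext ω
    rcases h01 ω with h | h <;> simp [Set.indicator, h]
  conv_lhs => rw [hind]
  exact integral_indicator_one (hf (measurableSet_singleton 1))

variable {ι : Type*} {X : ι → Ω → ℝ}

lemma integral_mul_of_iIndepFun_zero_or_one (hmeas : ∀ i, Measurable (X i))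
    (hindep : iIndepFun X μ) (hbin : ∀ i ω, X i ω = 0 ∨ X i ω = 1) [DecidableEq ι] (i j : ι) :
    ∫ ω, X i ω * X j ω ∂μ = (∫ ω, X i ω ∂μ) * (∫ ω, X j ω ∂μ) +
      if i = j then (∫ ω, X i ω ∂μ) - (∫ ω, X i ω ∂μ) ^ 2 else 0 := by
  by_cases hij : i = j
  · subst hij
    have hsq : ∀ ω, X i ω * X i ω = X i ω := fun ω => by rcases hbin i ω with h | h <;> simp [h]
    simp only [hsq, if_true]
    ring
  · rw [if_neg hij, add_zero]
    exact (hindep.indepFun hij).integral_mul_eq_mul_integral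
      (hmeas i).aestronglyMeasurable (hmeas j).aestronglyMeasurable

lemma integrable_const_mul_mul_of_zero_or_one [IsFiniteMeasure μ] (hmeas : ∀ i, Measurable (X i))
    (hbin : ∀ i ω, X i ω = 0 ∨ X i ω = 1) (a : ℝ) (i j : ι) :
    Integrable (fun ω => a * X i ω * X j ω) μ := by
  simp_rw [mul_assoc]
  refine (integrable_of_zero_or_one ((hmeas i).mul (hmeas j)) fun ω => ?_).const_mul _
  rcases hbin i ω with h | h <;> simp [h, hbin j ω]

variable [Fintype ι]

lemma integrable_quadForm_of_zero_or_one [IsFiniteMeasure μ] (W : Matrix ι ι ℝ)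
    (hmeas : ∀ i, Measurable (X i)) (hbin : ∀ i ω, X i ω = 0 ∨ X i ω = 1) :
    Integrable (fun ω => quadForm W (fun i => X i ω)) μ :=
  integrable_finsetSum _ fun i _ => integrable_finsetSum _ fun j _ =>
    integrable_const_mul_mul_of_zero_or_one hmeas hbin _ i j

lemma integral_quadForm_of_iIndepFun_zero_or_one [IsFiniteMeasure μ] (W : Matrix ι ι ℝ)
    (hmeas : ∀ i, Measurable (X i)) (hindep : iIndepFun X μ)
    (hbin : ∀ i ω, X i ω = 0 ∨ X i ω = 1) :
    ∫ ω, quadForm W (fun i => X i ω) ∂μ =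
      quadForm W (fun i => ∫ ω, X i ω ∂μ) +
        ∑ i, W i i * ((∫ ω, X i ω ∂μ) - (∫ ω, X i ω ∂μ) ^ 2) := by
  classical
  have hint := integrable_const_mul_mul_of_zero_or_one (μ := μ) hmeas hbin
  simp only [quadForm]
  rw [integral_finsetSum _ fun i _ => integrable_finsetSum _ fun j _ => hint (W i j) i j]
  simp_rw [integral_finsetSum _ fun j _ => hint (W _ j) _ j, mul_assoc, integral_const_mul,
    integral_mul_of_iIndepFun_zero_or_one hmeas hindep hbin, mul_add, Finset.sum_add_distrib]
  congr 1
  simp [mul_ite]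

lemma integral_quadForm_le_of_iIndepFun_zero_or_one [IsFiniteMeasure μ] {W : Matrix ι ι ℝ}
    (hW : ∀ i j, 0 ≤ W i j) (hmeas : ∀ i, Measurable (X i)) (hindep : iIndepFun X μ)
    (hbin : ∀ i ω, X i ω = 0 ∨ X i ω = 1) {α : ℝ} {y : ι → ℝ}
    (hmean : ∀ i, ∫ ω, X i ω ∂μ = α * y i) :
    ∫ ω, quadForm W (fun i => X i ω) ∂μ ≤ α ^ 2 * quadForm W y + α * ∑ i, W i i * y i := by
  rw [integral_quadForm_of_iIndepFun_zero_or_one W hmeas hindep hbin]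
  simp_rw [hmean, quadForm_const_mul, Finset.mul_sum]
  refine add_le_add_right (Finset.sum_le_sum fun i _ => ?_) _
  nlinarith [mul_nonneg (hW i i) (sq_nonneg (α * y i))]

lemma measure_lt_quadForm_le_of_iIndepFun_zero_or_one [IsFiniteMeasure μ] {W : Matrix ι ι ℝ}
    (hW : ∀ i j, 0 ≤ W i j) (hmeas : ∀ i, Measurable (X i)) (hindep : iIndepFun X μ)
    (hbin : ∀ i ω, X i ω = 0 ∨ X i ω = 1) {α c : ℝ} {y : ι → ℝ} (hα : 0 ≤ α)
    (hmean : ∀ i, ∫ ω, X i ω ∂μ = α * y i) (hc : 0 < c) (hWy : quadForm W y ≤ c)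
    (hdy : ∑ i, W i i * y i ≤ c) :
    μ {ω | c < quadForm W (fun i => X i ω)} ≤ ENNReal.ofReal (α ^ 2 + α) := by
  have hX0 : ∀ i ω, 0 ≤ X i ω := fun i ω => by rcases hbin i ω with h | h <;> simp [h]
  refine (measure_lt_le_ofReal_integral_div (integrable_quadForm_of_zero_or_one W hmeas hbin)
    (.of_forall fun ω => quadForm_nonneg hW (hX0 · ω)) hc).trans (ENNReal.ofReal_le_ofReal ?_)
  rw [div_le_iff₀ hc]
  calc ∫ ω, quadForm W (fun i => X i ω) ∂μ
      ≤ α ^ 2 * quadForm W y + α * ∑ i, W i i * y i :=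
        integral_quadForm_le_of_iIndepFun_zero_or_one hW hmeas hindep hbin hmean
    _ ≤ (α ^ 2 + α) * c := by nlinarith [mul_le_mul_of_nonneg_left hdy hα]

end

theorem stmt_17_general {n : ℕ} (r : ℕ)
    (W : Fin r → Matrix (Fin n) (Fin n) ℝ)
    (hW : ∀ k i j, 0 ≤ W k i j) (c : Fin r → ℝ) (hc : ∀ k, 0 < c k)
    (y : Fin n → ℝ) (hy : ∀ i, y i ∈ Set.Icc (0:ℝ) 1)
    (h1 : ∀ k, quadForm (W k) y ≤ c k) (h2 : ∀ k, (∑ i, W k i i * y i) ≤ c k)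
    (α : ℝ) (hα : α ∈ Set.Ioo (0:ℝ) 1)
    {Ω : Type*} [MeasurableSpace Ω] (μ : Measure Ω) [IsProbabilityMeasure μ]
    (X : Fin n → Ω → ℝ) (hmeas : ∀ i, Measurable (X i))
    (hindep : iIndepFun X μ)
    (hbin : ∀ i ω, X i ω = 0 ∨ X i ω = 1)
    (hdist : ∀ i, μ {ω | X i ω = 1} = ENNReal.ofReal (α * y i)) :
    μ {ω | ∃ k, c k < quadForm (W k) (fun i => X i ω)} ≤
        ENNReal.ofReal ((r : ℝ) * (α ^ 2 + α)) ∧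
    (r : ℝ) * ((1 / (2 * ((r : ℝ) + 1))) ^ 2 + 1 / (2 * ((r : ℝ) + 1))) ≤ 1 / 2 ∧
    (∀ δ ∈ Set.Ioo (0:ℝ) 1,
      alphaDelta r δ ≤ 1 / (2 * ((r : ℝ) + 1)) ∧
      (r : ℝ) * ((alphaDelta r δ) ^ 2 + alphaDelta r δ) ≤ 1 / 2 ∧
      (α = alphaDelta r δ →
        μ {ω | ∃ k, c k < quadForm (W k) (fun i => X i ω)} ≤ ENNReal.ofReal (1 / 2))) := by
  have hα0 : 0 ≤ α := hα.1.le
  have hy0 : ∀ i, 0 ≤ y i := fun i => (hy i).1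
  have hmean : ∀ i, ∫ ω, X i ω ∂μ = α * y i := fun i => by
    rw [integral_eq_measureReal_of_zero_or_one (hmeas i) (hbin i), measureReal_def, hdist i,
      ENNReal.toReal_ofReal (mul_nonneg hα0 (hy0 i))]
  have hinfeasible : μ {ω | ∃ k, c k < quadForm (W k) (fun i => X i ω)} ≤
      ENNReal.ofReal ((r : ℝ) * (α ^ 2 + α)) := by
    simpa [Set.ofPred_exists] using measure_iUnion_le_ofReal_card_mul fun k =>
      measure_lt_quadForm_le_of_iIndepFun_zero_or_one (hW k) hmeas hindep hbin hα0 hmean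
        (hc k) (h1 k) (h2 k)
  refine ⟨hinfeasible, mul_sq_add_le_half r.cast_nonneg (by positivity) le_rfl, fun δ hδ => ?_⟩
  have hle := alphaDelta_le r hδ.1.le hδ.2.le
  have hhalf := mul_sq_add_le_half r.cast_nonneg (alphaDelta_nonneg r hδ.1.le hδ.2.le) hle
  refine ⟨hle, hhalf, fun hαδ => hinfeasible.trans (ENNReal.ofReal_le_ofReal ?_)⟩
  rwa [hαδ]

theorem stmt_17 {n : ℕ} (r : ℕ) (hr : 1 ≤ r)
    (W : Fin r → Matrix (Fin n) (Fin n) ℝ) (hsym : ∀ k, (W k).IsSymm)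
    (hW : ∀ k i j, 0 ≤ W k i j) (c : Fin r → ℝ) (hc : ∀ k, 0 < c k)
    (y : Fin n → ℝ) (hy : ∀ i, y i ∈ Set.Icc (0:ℝ) 1)
    (h1 : ∀ k, quadForm (W k) y ≤ c k) (h2 : ∀ k, (∑ i, W k i i * y i) ≤ c k)
    (α : ℝ) (hα : α ∈ Set.Ioo (0:ℝ) 1)
    {Ω : Type*} [MeasurableSpace Ω] (μ : Measure Ω) [IsProbabilityMeasure μ]
    (X : Fin n → Ω → ℝ) (hmeas : ∀ i, Measurable (X i))
    (hindep : iIndepFun X μ)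
    (hbin : ∀ i ω, X i ω = 0 ∨ X i ω = 1)
    (hdist : ∀ i, μ {ω | X i ω = 1} = ENNReal.ofReal (α * y i)) :
    μ {ω | ∃ k, c k < quadForm (W k) (fun i => X i ω)} ≤
        ENNReal.ofReal ((r : ℝ) * (α ^ 2 + α)) ∧
    (r : ℝ) * ((1 / (2 * ((r : ℝ) + 1))) ^ 2 + 1 / (2 * ((r : ℝ) + 1))) ≤ 1 / 2 ∧
    (∀ δ ∈ Set.Ioo (0:ℝ) 1,
      alphaDelta r δ ≤ 1 / (2 * ((r : ℝ) + 1)) ∧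
      (r : ℝ) * ((alphaDelta r δ) ^ 2 + alphaDelta r δ) ≤ 1 / 2 ∧
      (α = alphaDelta r δ →
        μ {ω | ∃ k, c k < quadForm (W k) (fun i => X i ω)} ≤ ENNReal.ofReal (1 / 2))) :=
  stmt_17_general r W hW c hc y hy h1 h2 α hα μ X hmeas hindep hbin hdist
end
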